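/- Let G be a graph on n vertices, let λ > 0, and let 𝒯 = (T, {X_t}_{t∈V(T)}) be a separator tree of G. For each vertex v of G, let t_v be the unique node of T with v ∈ X_{t_v}, and let A_v be the union of the bags X_t over all ancestors t of t_v in T (including t_v itself). Then there exists a set Γ of canonical paths between the independent sets of G whose congestion with respect to the Glauber dynamics with fugacity λ satisfies ρ(Γ) ≤ 4n² · λ̃^{2α+1} · max_{v∈V(G)} |𝓘(G[A_v])|², where λ̃ = e^{|ln λ|} = max(λ, 1/λ) and α = max_{v∈V(G)} α(G[A_v]). -/

import Mathlib

open Finset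

section HardCoreDefs

variable {V : Type*} [Fintype V] [DecidableEq V]

/-- `I` is an independent set of the simple graph `G`. -/
def IsIndep (G : SimpleGraph V) (I : Finset V) : Prop :=
  ∀ u ∈ I, ∀ v ∈ I, ¬ G.Adj u v

open Classical in
/-- The set `𝓘(G)` of independent sets of `G`. -/
noncomputable def indepSets (G : SimpleGraph V) : Finset (Finset V) :=
  Finset.univ.filter fun I => IsIndep G I

/-- The hard-core partition function `Z_G(λ)`. -/
noncomputable def Z (G : SimpleGraph V) (lam : ℝ) : ℝ :=
  ∑ I ∈ indepSets G, lam ^ I.card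

/-- The hard-core distribution `π_{G,λ}`. -/
noncomputable def hardCore (G : SimpleGraph V) (lam : ℝ) (I : Finset V) : ℝ :=
  lam ^ I.card / Z G lam

open Classical in
/-- The transition probabilities of the Glauber dynamics on independent sets of `G`
with fugacity `λ`. -/
noncomputable def glauberP (G : SimpleGraph V) (lam : ℝ) (I J : Finset V) : ℝ :=
  (1 / (Fintype.card V : ℝ)) * ∑ v : V,
    if v ∈ I then
      (if J = I.erase v then 1 / (lam + 1) else if J = I then lam / (lam + 1) else 0)
    else if IsIndep G (insert v I) then
      (if J = insert v I then lam / (lam + 1) else if J = I then 1 / (lam + 1) else 0)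
    else (if J = I then 1 else 0)

/-- One step of the Glauber dynamics, applied to a distribution on independent sets. -/
noncomputable def stepDist (G : SimpleGraph V) (lam : ℝ) (μ : Finset V → ℝ) :
    Finset V → ℝ :=
  fun J => ∑ I ∈ indepSets G, μ I * glauberP G lam I J

/-- The distribution of the Glauber dynamics after `t` steps started from `I`. -/
noncomputable def distAfter (G : SimpleGraph V) (lam : ℝ) (I : Finset V) (t : ℕ) :
    Finset V → ℝ :=
  (stepDist G lam)^[t] (fun J => if J = I then 1 else 0)

/-- Total variation distance between two distributions on independent sets. -/
noncomputable def tvDist (G : SimpleGraph V) (μ ν : Finset V → ℝ) : ℝ :=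
  (1 / 2) * ∑ I ∈ indepSets G, |μ I - ν I|

/-- The mixing time `τ_{G,λ}` of the Glauber dynamics. -/
noncomputable def mixingTime (G : SimpleGraph V) (lam : ℝ) : ℕ :=
  sInf {t : ℕ | ∀ I ∈ indepSets G,
    tvDist G (distAfter G lam I t) (hardCore G lam) ≤ 1 / 4}

/-- `λ̃ = e^{|ln λ|} = max (λ, 1/λ)`. -/
noncomputable def lamTilde (lam : ℝ) : ℝ := max lam lam⁻¹

/-- The independence number of the subgraph of `G` induced by `S`. -/
noncomputable def alphaOn (G : SimpleGraph V) (S : Finset V) : ℕ :=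
  ((indepSets G).filter fun I => I ⊆ S).sup Finset.card

/-- The number of independent sets of the subgraph of `G` induced by `S`. -/
noncomputable def numIndepOn (G : SimpleGraph V) (S : Finset V) : ℕ :=
  ((indepSets G).filter fun I => I ⊆ S).card

/-- The subgraph of `G` induced by a finite vertex set `S`. -/
def inducedF (G : SimpleGraph V) (S : Finset V) : SimpleGraph {x : V // x ∈ S} :=
  SimpleGraph.comap Subtype.val G

end HardCoreDefs
/-- A rooted full binary tree, each of whose nodes carries a bag of vertices. -/
inductive BTree (V : Type*) where
  | leaf : Finset V → BTree V
  | node : Finset V → BTree V → BTree V → BTree V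

section BTreeDefs

variable {V : Type*} [Fintype V] [DecidableEq V]

/-- The set `V_t` of vertices of `G` appearing in the bags of the subtree rooted at `t`. -/
def BTree.verts : BTree V → Finset V
  | .leaf b => b
  | .node b l r => b ∪ l.verts ∪ r.verts

end BTreeDefs
section SepTree

variable {V : Type*} [Fintype V] [DecidableEq V]

/-- `t` is a separator tree of `G` (restricted to the vertices `t.verts`): at every internal
node the bag, together with the vertex sets of the two subtrees, partitions the vertices below,
there are no edges between the two subtrees, and every leaf carries at most one vertex. -/
def IsSepTree (G : SimpleGraph V) : BTree V → Prop
  | .leaf b => b.card ≤ 1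
  | .node b l r =>
      Disjoint b l.verts ∧ Disjoint b r.verts ∧ Disjoint l.verts r.verts ∧
      (∀ u ∈ l.verts, ∀ v ∈ r.verts, ¬ G.Adj u v) ∧
      IsSepTree G l ∧ IsSepTree G r

/-- The set `A_v`: the union of the bags of the ancestors (including itself) of the unique
node whose bag contains `v`. -/
def BTree.anc (v : V) : BTree V → Finset V
  | .leaf b => b
  | .node b l r =>
      if v ∈ b then b else b ∪ (if v ∈ l.verts then BTree.anc v l else BTree.anc v r)

end SepTree
section CanonicalPaths

variable {V : Type*} [Fintype V] [DecidableEq V]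

/-- The transition `(W, W')` is used by the path `l`, i.e. `W` and `W'` appear consecutively. -/
def usesEdge (l : List (Finset V)) (W W' : Finset V) : Prop :=
  (W, W') ∈ l.zip l.tail

/-- `l` is a path from `K` to `L` in the reconfiguration graph `𝓖(G)`: it starts at `K`,
ends at `L`, visits only independent sets, and consecutive sets have symmetric difference of
size exactly one. -/
def IsReconfPath (G : SimpleGraph V) (K L : Finset V) (l : List (Finset V)) : Prop :=
  l.head? = some K ∧ l.getLast? = some L ∧
  (∀ I ∈ l, IsIndep G I) ∧ List.Chain' (fun I J => (symmDiff I J).card = 1) l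

open Classical in
/-- The congestion `ρ(Γ, e)` through the transition `e = (W, W')` of the family of canonical
paths `γ`, for the Glauber dynamics with fugacity `λ`: `(π(W) P(W,W'))⁻¹` times the sum over
pairs `(K, L)` whose canonical path uses `e` of `π(K) π(L) |γ_{K,L}|`. -/
noncomputable def congestionAt (G : SimpleGraph V) (lam : ℝ)
    (γ : Finset V → Finset V → List (Finset V)) (W W' : Finset V) : ℝ :=
  (1 / (hardCore G lam W * glauberP G lam W W')) *
    ∑ K ∈ indepSets G, ∑ L ∈ indepSets G,
      if usesEdge (γ K L) W W' then
        hardCore G lam K * hardCore G lam L * (((γ K L).length - 1 : ℕ) : ℝ)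
      else 0

end CanonicalPaths

/-!
The canonical path from `K` to `L` follows the separator tree: at a node it removes the
`K`-vertices of the bag, handles the left and then the right subtree recursively, and finally
inserts the `L`-vertices of the bag. When such a path flips a vertex `v`, every vertex outside
`A_v` either already carries its value in `L` or still carries its value in `K`, and no edge joins
the two groups. So `η = (K on the first group) ∪ (L on the second)` is independent, and once the
transition is fixed, `(K ∩ A_v, L ∩ A_v, η)` determines `(K, L)`: at most `|𝓘(G[A_v])|²` pairs
share a given `η`. Comparing `π(K) π(L)` with `π(W ∪ W') π(η)` costs at most `λ̃^{2α}`, a path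
has length at most `2n`, and `π(W ∪ W') ≤ n (λ + 1) π(W) P(W, W') ≤ 2 n λ̃ π(W) P(W, W')`.
-/

section PartitionCard

variable {V : Type*} [DecidableEq V]

theorem card_inter_add_card_inter_add_card_inter {A B C K : Finset V} (hAB : Disjoint A B)
    (hAC : Disjoint A C) (hBC : Disjoint B C) (hK : K ⊆ A ∪ B ∪ C) :
    (K ∩ A).card + (K ∩ B).card + (K ∩ C).card = K.card := by
  have hKABC : K ∩ (A ∪ B ∪ C) = K := inter_eq_left.2 hK
  rw [inter_union_distrib_left, inter_union_distrib_left] at hKABC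
  rw [← card_union_of_disjoint (hAB.mono inter_subset_right inter_subset_right),
    ← card_union_of_disjoint (disjoint_union_left.2 ⟨hAC.mono inter_subset_right
      inter_subset_right, hBC.mono inter_subset_right inter_subset_right⟩), hKABC]

end PartitionCard

section IndependentSets

variable {V : Type*} {G : SimpleGraph V}

theorem IsIndep.mono {I J : Finset V} (h : IsIndep G I) (hJ : J ⊆ I) : IsIndep G J :=
  fun u hu v hv => h u (hJ hu) v (hJ hv)

theorem IsIndep.union [DecidableEq V] {A B : Finset V} (hA : IsIndep G A) (hB : IsIndep G B)
    (hAB : ∀ a ∈ A, ∀ b ∈ B, ¬ G.Adj a b) : IsIndep G (A ∪ B) := by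
  intro u hu v hv
  rcases mem_union.1 hu with hu | hu <;> rcases mem_union.1 hv with hv | hv
  · exact hA u hu v hv
  · exact hAB u hu v hv
  · exact fun hadj => hAB v hv u hu hadj.symm
  · exact hB u hu v hv

theorem mem_indepSets [Fintype V] {I : Finset V} : I ∈ indepSets G ↔ IsIndep G I := by
  classical
  simp [indepSets]

variable [Fintype V] [DecidableEq V]

theorem card_inter_le_alphaOn {I : Finset V} (hI : IsIndep G I) (S : Finset V) :
    (I ∩ S).card ≤ alphaOn G S :=
  le_sup (f := card)
    (mem_filter.2 ⟨mem_indepSets.2 (hI.mono inter_subset_left), inter_subset_right⟩)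

end IndependentSets

section HardCore

variable {V : Type*} [Fintype V] {G : SimpleGraph V} {lam : ℝ}

theorem Z_pos (hlam : 0 < lam) : 0 < Z G lam :=
  sum_pos (fun _ _ => pow_pos hlam _) ⟨∅, mem_indepSets.2 (by simp [IsIndep])⟩

theorem hardCore_pos (hlam : 0 < lam) (I : Finset V) : 0 < hardCore G lam I :=
  div_pos (pow_pos hlam _) (Z_pos hlam)

theorem sum_hardCore (hlam : 0 < lam) : ∑ I ∈ indepSets G, hardCore G lam I = 1 := by
  simp only [hardCore, ← sum_div]
  exact div_self (Z_pos hlam).ne'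

theorem hardCore_mul_hardCore (lam : ℝ) (I J : Finset V) :
    hardCore G lam I * hardCore G lam J = lam ^ (I.card + J.card) / Z G lam ^ 2 := by
  simp only [hardCore]
  ring

theorem one_le_lamTilde (hlam : 0 < lam) : 1 ≤ lamTilde lam := by
  rcases le_total 1 lam with h | h
  · exact le_max_of_le_left h
  · exact le_max_of_le_right ((one_le_inv₀ hlam).2 h)

theorem pow_div_pow_le_lamTilde_pow (hlam : 0 < lam) {a b m : ℕ} (ha : a ≤ m) (hb : b ≤ m) :
    lam ^ a / lam ^ b ≤ lamTilde lam ^ m := by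
  have h1 := one_le_lamTilde hlam
  rcases le_total 1 lam with h | h
  · calc lam ^ a / lam ^ b ≤ lam ^ a := div_le_self (pow_nonneg hlam.le a) (one_le_pow₀ h)
      _ ≤ lamTilde lam ^ a := pow_le_pow_left₀ hlam.le (le_max_left _ _) a
      _ ≤ lamTilde lam ^ m := pow_le_pow_right₀ h1 ha
  · calc lam ^ a / lam ^ b ≤ 1 / lam ^ b :=
          div_le_div_of_nonneg_right (pow_le_one₀ hlam.le h) (pow_pos hlam b).le
      _ = lam⁻¹ ^ b := by rw [one_div, inv_pow]
      _ ≤ lamTilde lam ^ b := pow_le_pow_left₀ (inv_nonneg.2 hlam.le) (le_max_right _ _) b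
      _ ≤ lamTilde lam ^ m := pow_le_pow_right₀ h1 hb

end HardCore

section Flips

variable {V : Type*} [DecidableEq V]

def IsFlip (W W' : Finset V) (v : V) : Bool → Prop
  | false => v ∈ W ∧ W' = W.erase v
  | true => v ∉ W ∧ W' = insert v W

theorem IsFlip.symmDiff_eq {W W' : Finset V} {v : V} {ph : Bool} (h : IsFlip W W' v ph) :
    symmDiff W W' = {v} := by
  cases ph <;> obtain ⟨hv, rfl⟩ := h
  · rw [symmDiff_of_ge (erase_subset v W), sdiff_erase_self hv]
  · rw [symmDiff_of_le (subset_insert v W), insert_sdiff_of_notMem _ hv, sdiff_self, bot_eq_empty,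
      insert_empty]

theorem IsFlip.mem_iff {W W' : Finset V} {v : V} {ph : Bool} (h : IsFlip W W' v ph) :
    v ∈ W ↔ ph = false := by
  cases ph <;> simp [h.1]

theorem IsFlip.unique {W W' : Finset V} {u v : V} {ph ph' : Bool} (h : IsFlip W W' v ph)
    (h' : IsFlip W W' u ph') : u = v ∧ ph' = ph := by
  have huv : u = v := singleton_injective (h'.symmDiff_eq.symm.trans h.symmDiff_eq)
  subst huv
  refine ⟨rfl, ?_⟩
  have := h.mem_iff.symm.trans h'.mem_iff
  cases ph <;> cases ph' <;> simp_all

theorem IsFlip.card_symmDiff {W W' : Finset V} {v : V} {ph : Bool} (h : IsFlip W W' v ph) :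
    (symmDiff W W').card = 1 := by
  rw [h.symmDiff_eq, card_singleton]

theorem IsFlip.mem_union_iff {W W' : Finset V} {v x : V} {ph : Bool} (h : IsFlip W W' v ph)
    (hx : x ≠ v) : x ∈ W ∪ W' ↔ x ∈ W := by
  cases ph <;> obtain ⟨-, rfl⟩ := h <;> simp [hx]

theorem IsFlip.isIndep_union {G : SimpleGraph V} {W W' : Finset V} {v : V} {ph : Bool}
    (h : IsFlip W W' v ph) (hW : IsIndep G W) (hW' : ph = true → IsIndep G W') :
    IsIndep G (W ∪ W') := by
  cases ph <;> obtain ⟨-, rfl⟩ := h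
  · rwa [union_eq_left.2 (erase_subset v W)]
  · rw [union_eq_right.2 (subset_insert v W)]
    exact hW' rfl

end Flips

section Lists

variable {α : Type*}

/-- Concatenation of two paths, the second of which starts where the first ends. -/
def glue (p q : List α) : List α := p ++ q.tail

def Joins (p : List α) (x y : α) : Prop := p.head? = some x ∧ p.getLast? = some y

theorem Joins.ne_nil {p : List α} {x y : α} (h : Joins p x y) : p ≠ [] := by
  rintro rfl
  simp [Joins] at h

theorem Joins.glue {p q : List α} {x y z : α} (hp : Joins p x y) (hq : Joins q y z) :
    Joins (glue p q) x z := by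
  obtain ⟨hpx, hpy⟩ := hp
  obtain ⟨hqy, hqz⟩ := hq
  cases p with
  | nil => simp at hpx
  | cons a p =>
    cases q with
    | nil => simp at hqy
    | cons b q =>
      simp only [List.head?_cons, Option.some.injEq] at hpx hqy
      subst hpx hqy
      refine ⟨rfl, ?_⟩
      cases q with
      | nil => simp_all [_root_.glue]
      | cons c q =>
        rw [_root_.glue, List.tail_cons, List.getLast?_append, ← List.getLast?_cons_cons (a := b),
          hqz]
        rfl

theorem mem_glue {p q : List α} {T : α} (h : T ∈ glue p q) : T ∈ p ∨ T ∈ q :=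
  (List.mem_append.1 h).imp id List.mem_of_mem_tail

end Lists

section Transitions

variable {V : Type*}

theorem usesEdge_cons {a : Finset V} {l : List (Finset V)} {W W' : Finset V} :
    usesEdge (a :: l) W W' ↔ (a = W ∧ l.head? = some W') ∨ usesEdge l W W' := by
  cases l with
  | nil => simp [usesEdge]
  | cons b m =>
    simp only [usesEdge, List.tail_cons, List.zip_cons_cons, List.mem_cons, List.head?_cons,
      Prod.mk.injEq, Option.some.injEq, eq_comm]

theorem usesEdge_mem {l : List (Finset V)} {W W' : Finset V} (h : usesEdge l W W') :
    W ∈ l ∧ W' ∈ l :=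
  ⟨List.of_mem_zip h |>.1, List.mem_of_mem_tail (List.of_mem_zip h).2⟩

theorem isChain_of_usesEdge {R : Finset V → Finset V → Prop} {l : List (Finset V)}
    (h : ∀ W W', usesEdge l W W' → R W W') : List.IsChain R l := by
  induction l with
  | nil => exact List.IsChain.nil
  | cons a l ih =>
    refine List.isChain_cons.2 ⟨fun y hy => h a y (usesEdge_cons.2 (Or.inl ⟨rfl, hy⟩)),
      ih fun W W' hu => h W W' (usesEdge_cons.2 (Or.inr hu))⟩

theorem usesEdge_append {p q : List (Finset V)} {W W' : Finset V} (h : usesEdge (p ++ q) W W') :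
    usesEdge p W W' ∨ usesEdge q W W' ∨ (p.getLast? = some W ∧ q.head? = some W') := by
  induction p with
  | nil => exact Or.inr (Or.inl h)
  | cons a p ih =>
    rcases usesEdge_cons.1 h with ⟨rfl, h2⟩ | h
    · cases p with
      | nil => exact Or.inr (Or.inr ⟨rfl, h2⟩)
      | cons b m => exact Or.inl (usesEdge_cons.2 (Or.inl ⟨rfl, by simpa using h2⟩))
    · rcases ih h with h | h | ⟨h1, h2⟩
      · exact Or.inl (usesEdge_cons.2 (Or.inr h))
      · exact Or.inr (Or.inl h)
      · cases p with
        | nil => simp at h1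
        | cons b m => exact Or.inr (Or.inr ⟨by simpa using h1, h2⟩)

theorem usesEdge_glue {p q : List (Finset V)} {x y z W W' : Finset V} (hp : Joins p x y)
    (hq : Joins q y z) (hu : usesEdge (glue p q) W W') : usesEdge p W W' ∨ usesEdge q W W' := by
  obtain ⟨b, q, rfl⟩ : ∃ b q', q = b :: q' := List.exists_cons_of_ne_nil hq.ne_nil
  obtain rfl : b = y := by simpa using hq.1
  rcases usesEdge_append hu with h | h | ⟨h1, h2⟩
  · exact Or.inl h
  · exact Or.inr (usesEdge_cons.2 (Or.inr h))
  · obtain rfl : W = b := Option.some_injective _ (h1.symm.trans hp.2)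
    exact Or.inr (usesEdge_cons.2 (Or.inl ⟨rfl, h2⟩))

end Transitions

section FlipSequences

variable {V : Type*} [DecidableEq V]

def remSeq (S : Finset V) : List V → List (Finset V)
  | [] => [S]
  | a :: l => S :: remSeq (S.erase a) l

def addSeq (S : Finset V) : List V → List (Finset V)
  | [] => [S]
  | a :: l => S :: addSeq (insert a S) l

theorem remSeq_joins (S : Finset V) (l : List V) : Joins (remSeq S l) S (S \ l.toFinset) := by
  induction l generalizing S with
  | nil => simp [remSeq, Joins]
  | cons a l ih =>
    obtain ⟨-, h⟩ := ih (S.erase a)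
    refine ⟨rfl, ?_⟩
    simp only [remSeq, List.getLast?_cons, h, Option.getD_some, List.toFinset_cons,
      sdiff_insert, erase_sdiff_comm]

theorem addSeq_joins (S : Finset V) (l : List V) : Joins (addSeq S l) S (S ∪ l.toFinset) := by
  induction l generalizing S with
  | nil => simp [addSeq, Joins]
  | cons a l ih =>
    obtain ⟨-, h⟩ := ih (insert a S)
    refine ⟨rfl, ?_⟩
    simp only [addSeq, List.getLast?_cons, h, Option.getD_some, List.toFinset_cons,
      union_insert, insert_union]

theorem length_remSeq (S : Finset V) (l : List V) : (remSeq S l).length = l.length + 1 := by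
  induction l generalizing S <;> simp [remSeq, *]

theorem length_addSeq (S : Finset V) (l : List V) : (addSeq S l).length = l.length + 1 := by
  induction l generalizing S <;> simp [addSeq, *]

theorem of_mem_remSeq {S T : Finset V} {l : List V} (hT : T ∈ remSeq S l) :
    T ⊆ S ∧ ∀ x ∉ l, (x ∈ T ↔ x ∈ S) := by
  induction l generalizing S with
  | nil => simp_all [remSeq]
  | cons a l ih =>
    rcases List.mem_cons.1 hT with rfl | hT
    · simp
    · obtain ⟨h1, h2⟩ := ih hT
      refine ⟨h1.trans (erase_subset a S), fun x hx => ?_⟩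
      rw [h2 x (fun h => hx (List.mem_cons_of_mem a h)), mem_erase]
      simp_all

theorem of_mem_addSeq {S T : Finset V} {l : List V} (hT : T ∈ addSeq S l) :
    S ⊆ T ∧ ∀ x ∉ l, (x ∈ T ↔ x ∈ S) := by
  induction l generalizing S with
  | nil => simp_all [addSeq]
  | cons a l ih =>
    rcases List.mem_cons.1 hT with rfl | hT
    · simp
    · obtain ⟨h1, h2⟩ := ih hT
      refine ⟨(subset_insert a S).trans h1, fun x hx => ?_⟩
      rw [h2 x (fun h => hx (List.mem_cons_of_mem a h)), mem_insert]
      simp_all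

theorem addSeq_subset {S T : Finset V} {l : List V} (hT : T ∈ addSeq S l) :
    T ⊆ S ∪ l.toFinset := by
  intro x hx
  by_cases hxl : x ∈ l
  · exact mem_union_right _ (List.mem_toFinset.2 hxl)
  · exact mem_union_left _ (((of_mem_addSeq hT).2 x hxl).1 hx)

theorem exists_isFlip_of_usesEdge_remSeq {S W W' : Finset V} {l : List V} (hl : l.Nodup)
    (hlS : ∀ x ∈ l, x ∈ S) (hu : usesEdge (remSeq S l) W W') : ∃ v ∈ l, IsFlip W W' v false := by
  induction l generalizing S with
  | nil => simp [remSeq, usesEdge] at hu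
  | cons a l ih =>
    rcases usesEdge_cons.1 hu with ⟨rfl, h⟩ | hu
    · exact ⟨a, List.mem_cons_self, hlS a List.mem_cons_self, by cases l <;> simp_all [remSeq]⟩
    · obtain ⟨v, hv, hflip⟩ := ih (List.nodup_cons.1 hl).2
        (fun x hx => mem_erase.2 ⟨by rintro rfl; exact (List.nodup_cons.1 hl).1 hx,
          hlS x (List.mem_cons_of_mem a hx)⟩) hu
      exact ⟨v, List.mem_cons_of_mem a hv, hflip⟩

theorem exists_isFlip_of_usesEdge_addSeq {S W W' : Finset V} {l : List V} (hl : l.Nodup)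
    (hlS : ∀ x ∈ l, x ∉ S) (hu : usesEdge (addSeq S l) W W') : ∃ v ∈ l, IsFlip W W' v true := by
  induction l generalizing S with
  | nil => simp [addSeq, usesEdge] at hu
  | cons a l ih =>
    rcases usesEdge_cons.1 hu with ⟨rfl, h⟩ | hu
    · exact ⟨a, List.mem_cons_self, hlS a List.mem_cons_self, by cases l <;> simp_all [addSeq]⟩
    · obtain ⟨v, hv, hflip⟩ := ih (List.nodup_cons.1 hl).2
        (fun x hx => by
          simp only [mem_insert, not_or]
          exact ⟨by rintro rfl; exact (List.nodup_cons.1 hl).1 hx,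
            hlS x (List.mem_cons_of_mem a hx)⟩)
        hu
      exact ⟨v, List.mem_cons_of_mem a hv, hflip⟩

end FlipSequences

section SeparatorTrees

variable {V : Type*} [DecidableEq V] {G : SimpleGraph V}

namespace BTree

/- While the canonical path flips `v` (removing it if `ph = false`, inserting it if `ph = true`),
the vertices of `t.done v ph` already carry their final values and those of `t.rest v ph` still
carry their initial ones; only the vertices of `t.anc v` are in transit. -/

def done (v : V) (ph : Bool) : BTree V → Finset V
  | .leaf _ => ∅
  | .node b l r =>
      if v ∈ b then (if ph then l.verts ∪ r.verts else ∅)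
      else if v ∈ l.verts then l.done v ph
      else l.verts ∪ r.done v ph

def rest (v : V) (ph : Bool) : BTree V → Finset V
  | .leaf _ => ∅
  | .node b l r =>
      if v ∈ b then (if ph then ∅ else l.verts ∪ r.verts)
      else if v ∈ l.verts then l.rest v ph ∪ r.verts
      else r.rest v ph

theorem mem_verts_node {x : V} {b : Finset V} {l r : BTree V} :
    x ∈ (node b l r).verts ↔ x ∈ b ∨ x ∈ l.verts ∨ x ∈ r.verts := by
  simp [verts]

theorem bag_subset_verts {b : Finset V} {l r : BTree V} : b ⊆ (node b l r).verts :=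
  subset_union_left.trans subset_union_left

theorem left_subset_verts {b : Finset V} {l r : BTree V} : l.verts ⊆ (node b l r).verts :=
  subset_union_right.trans subset_union_left

theorem right_subset_verts {b : Finset V} {l r : BTree V} : r.verts ⊆ (node b l r).verts :=
  subset_union_right

theorem anc_subset_verts (v : V) (t : BTree V) : t.anc v ⊆ t.verts := by
  induction t with
  | leaf b => exact subset_rfl
  | node b l r ihl ihr =>
    intro x hx
    have := @ihl x
    have := @ihr x
    simp only [anc, verts] at hx ⊢
    split_ifs at hx <;> grind

theorem done_subset_verts (v : V) (ph : Bool) (t : BTree V) : t.done v ph ⊆ t.verts := by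
  induction t with
  | leaf b => exact empty_subset _
  | node b l r ihl ihr =>
    intro x hx
    have := @ihl x
    have := @ihr x
    simp only [done, verts] at hx ⊢
    split_ifs at hx <;> grind

theorem rest_subset_verts (v : V) (ph : Bool) (t : BTree V) : t.rest v ph ⊆ t.verts := by
  induction t with
  | leaf b => exact empty_subset _
  | node b l r ihl ihr =>
    intro x hx
    have := @ihl x
    have := @ihr x
    simp only [rest, verts] at hx ⊢
    split_ifs at hx <;> grind

theorem mem_anc_self {v : V} {t : BTree V} (hv : v ∈ t.verts) : v ∈ t.anc v := by
  induction t with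
  | leaf b => exact hv
  | node b l r ihl ihr =>
    simp only [anc]
    split_ifs with hb hl
    · exact hb
    · exact mem_union_right _ (ihl hl)
    · exact mem_union_right _ (ihr (by simpa [mem_verts_node, hb, hl] using hv))

end BTree

namespace IsSepTree

open BTree

theorem disjoint_anc_done {t : BTree V} (ht : IsSepTree G t) (v : V) (ph : Bool) :
    Disjoint (t.anc v) (t.done v ph) := by
  induction t with
  | leaf b => simp [done]
  | node b l r ihl ihr =>
    obtain ⟨hbl, hbr, hlr, -, htl, htr⟩ := ht
    simp only [anc, done]
    split_ifs
    · exact disjoint_union_right.2 ⟨hbl, hbr⟩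
    · exact disjoint_empty_right _
    · exact disjoint_union_left.2 ⟨hbl.mono_right (done_subset_verts v ph l), ihl htl⟩
    · refine disjoint_union_left.2 ⟨disjoint_union_right.2
        ⟨hbl, hbr.mono_right (done_subset_verts v ph r)⟩, disjoint_union_right.2 ⟨?_, ihr htr⟩⟩
      exact hlr.symm.mono_left (anc_subset_verts v r)

theorem mem_rest_iff {t : BTree V} (ht : IsSepTree G t) {v x : V} {ph : Bool}
    (hx : x ∈ t.verts) : x ∈ t.rest v ph ↔ x ∉ t.anc v ∧ x ∉ t.done v ph := by
  induction t with
  | leaf b => simpa [rest, anc, done, verts] using hx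
  | node b l r ihl ihr =>
    obtain ⟨hbl, hbr, hlr, -, htl, htr⟩ := ht
    have := ihl htl
    have := ihr htr
    have : x ∈ b → x ∉ l.verts := fun h => disjoint_left.1 hbl h
    have : x ∈ b → x ∉ r.verts := fun h => disjoint_left.1 hbr h
    have : x ∈ l.verts → x ∉ r.verts := fun h => disjoint_left.1 hlr h
    have := @anc_subset_verts _ _ v l x
    have := @anc_subset_verts _ _ v r x
    have := @done_subset_verts _ _ v ph l x
    have := @done_subset_verts _ _ v ph r x
    have := @rest_subset_verts _ _ v ph l x
    have := @rest_subset_verts _ _ v ph r x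
    rw [mem_verts_node] at hx
    simp only [rest, anc, done]
    split_ifs <;> grind

theorem not_adj_done_rest {t : BTree V} (ht : IsSepTree G t) (v : V) (ph : Bool) :
    ∀ x ∈ t.done v ph, ∀ y ∈ t.rest v ph, ¬ G.Adj x y := by
  induction t with
  | leaf b => simp [done]
  | node b l r ihl ihr =>
    obtain ⟨-, -, -, hlr, htl, htr⟩ := ht
    intro x hx y hy
    simp only [done, rest] at hx hy
    split_ifs at hx hy with hb hl
    · simp_all
    · simp_all
    · rcases mem_union.1 hy with hy | hy
      · exact ihl htl x hx y hy
      · exact hlr x (done_subset_verts v ph l hx) y hy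
    · rcases mem_union.1 hx with hx | hx
      · exact hlr x hx y (rest_subset_verts v ph r hy)
      · exact ihr htr x hx y hy

end IsSepTree

end SeparatorTrees

section CanonicalPaths

variable {V : Type*} [DecidableEq V] {G : SimpleGraph V}

namespace BTree

/-- A path from `C ∪ K` to `C ∪ L`, where `C` is the part of the state outside the subtree `t`,
held fixed while `t` is processed. -/
noncomputable def canonPath : BTree V → Finset V → Finset V → Finset V → List (Finset V)
  | .leaf _, C, K, L => glue (remSeq (C ∪ K) K.toList) (addSeq C L.toList)
  | .node b l r, C, K, L =>
      glue (remSeq (C ∪ K) (K ∩ b).toList)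
        (glue (l.canonPath (C ∪ (K ∩ r.verts)) (K ∩ l.verts) (L ∩ l.verts))
          (glue (r.canonPath (C ∪ (L ∩ l.verts)) (K ∩ r.verts) (L ∩ r.verts))
            (addSeq (C ∪ (L ∩ l.verts) ∪ (L ∩ r.verts)) (L ∩ b).toList)))

end BTree

open BTree

structure Admissible (G : SimpleGraph V) (t : BTree V) (C K L : Finset V) : Prop where
  source_subset : K ⊆ t.verts
  target_subset : L ⊆ t.verts
  disjoint_verts : Disjoint C t.verts
  isIndep_source : IsIndep G (C ∪ K)
  isIndep_target : IsIndep G (C ∪ L)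

theorem isIndep_union_inter_union_inter {C K L X Y : Finset V} (hK : IsIndep G (C ∪ K))
    (hL : IsIndep G (C ∪ L)) (hXY : ∀ x ∈ X, ∀ y ∈ Y, ¬ G.Adj x y) :
    IsIndep G (C ∪ (K ∩ X) ∪ (L ∩ Y)) := by
  refine IsIndep.union (hK.mono (union_subset_union_right inter_subset_left))
    (hL.mono (inter_subset_left.trans subset_union_right)) fun a ha y hy => ?_
  rcases mem_union.1 ha with ha | ha
  · exact hL a (mem_union_left _ ha) y (mem_union_right _ (mem_inter.1 hy).1)
  · exact hXY a (mem_inter.1 ha).2 y (mem_inter.1 hy).2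

namespace Admissible

variable {b : Finset V} {l r : BTree V} {C K L : Finset V}

theorem left (h : Admissible G (node b l r) C K L) (ht : IsSepTree G (node b l r)) :
    Admissible G l (C ∪ (K ∩ r.verts)) (K ∩ l.verts) (L ∩ l.verts) := by
  obtain ⟨-, -, hlr, hcross, -, -⟩ := ht
  refine ⟨inter_subset_right, inter_subset_right, disjoint_union_left.2
    ⟨h.disjoint_verts.mono_right left_subset_verts, hlr.symm.mono_left inter_subset_right⟩,
    h.isIndep_source.mono ?_, isIndep_union_inter_union_inter h.isIndep_source h.isIndep_target
      fun x hx y hy hxy => hcross y hy x hx hxy.symm⟩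
  exact union_subset (union_subset_union_right inter_subset_left)
    (inter_subset_left.trans subset_union_right)

theorem right (h : Admissible G (node b l r) C K L) (ht : IsSepTree G (node b l r)) :
    Admissible G r (C ∪ (L ∩ l.verts)) (K ∩ r.verts) (L ∩ r.verts) := by
  obtain ⟨-, -, hlr, hcross, -, -⟩ := ht
  refine ⟨inter_subset_right, inter_subset_right, disjoint_union_left.2
    ⟨h.disjoint_verts.mono_right right_subset_verts, hlr.mono_left inter_subset_right⟩, ?_,
    h.isIndep_target.mono ?_⟩
  · rw [union_right_comm]
    exact isIndep_union_inter_union_inter h.isIndep_source h.isIndep_target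
      fun x hx y hy hxy => hcross y hy x hx hxy.symm
  · exact union_subset (union_subset_union_right inter_subset_left)
      (inter_subset_left.trans subset_union_right)

theorem joins_remSeq (h : Admissible G (node b l r) C K L) (ht : IsSepTree G (node b l r)) :
    Joins (remSeq (C ∪ K) (K ∩ b).toList) (C ∪ K) (C ∪ (K ∩ r.verts) ∪ (K ∩ l.verts)) := by
  convert remSeq_joins (C ∪ K) (K ∩ b).toList using 1
  obtain ⟨hbl, hbr, -, -, -, -⟩ := ht
  ext x
  have := @h.source_subset x
  have : x ∈ C → x ∉ (node b l r).verts := fun hx => disjoint_left.1 h.disjoint_verts hx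
  have : x ∈ b → x ∉ l.verts := fun h => disjoint_left.1 hbl h
  have : x ∈ b → x ∉ r.verts := fun h => disjoint_left.1 hbr h
  simp only [mem_verts_node, toList_toFinset, mem_union, mem_inter, mem_sdiff] at *
  grind

theorem joins_addSeq (h : Admissible G (node b l r) C K L) :
    Joins (addSeq (C ∪ (L ∩ l.verts) ∪ (L ∩ r.verts)) (L ∩ b).toList)
      (C ∪ (L ∩ l.verts) ∪ (L ∩ r.verts)) (C ∪ L) := by
  convert addSeq_joins _ (L ∩ b).toList using 1
  ext x
  have := @h.target_subset x
  simp only [mem_verts_node, toList_toFinset, mem_union, mem_inter] at *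
  grind

theorem joins_remSeq_leaf (h : Admissible G (leaf b) C K L) :
    Joins (remSeq (C ∪ K) K.toList) (C ∪ K) C := by
  convert remSeq_joins (C ∪ K) K.toList using 1
  rw [toList_toFinset, union_sdiff_right, sdiff_eq_self_of_disjoint]
  exact h.disjoint_verts.mono_right h.source_subset

end Admissible

theorem canonPath_joins {t : BTree V} (ht : IsSepTree G t) {C K L : Finset V}
    (h : Admissible G t C K L) : Joins (t.canonPath C K L) (C ∪ K) (C ∪ L) := by
  induction t generalizing C K L with
  | leaf b => exact h.joins_remSeq_leaf.glue (by simpa using addSeq_joins C L.toList)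
  | node b l r ihl ihr =>
    obtain ⟨-, -, -, -, htl, htr⟩ := id ht
    have hr := ihr htr (h.right ht)
    rw [union_right_comm] at hr
    exact (h.joins_remSeq ht).glue ((ihl htl (h.left ht)).glue (hr.glue h.joins_addSeq))

theorem length_canonPath {t : BTree V} (ht : IsSepTree G t) {C K L : Finset V}
    (h : Admissible G t C K L) : (t.canonPath C K L).length = K.card + L.card + 1 := by
  induction t generalizing C K L with
  | leaf b =>
    simp only [canonPath, glue, List.length_append, List.length_tail, length_remSeq,
      length_addSeq, length_toList]
    omega
  | node b l r ihl ihr =>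
    obtain ⟨hbl, hbr, hlr, -, htl, htr⟩ := id ht
    have hK := card_inter_add_card_inter_add_card_inter hbl hbr hlr h.source_subset
    have hL := card_inter_add_card_inter_add_card_inter hbl hbr hlr h.target_subset
    simp only [canonPath, glue, List.length_append, List.length_tail, length_remSeq,
      length_addSeq, length_toList, ihl htl (h.left ht), ihr htr (h.right ht)]
    omega

theorem of_mem_canonPath {t : BTree V} (ht : IsSepTree G t) {C K L S : Finset V}
    (h : Admissible G t C K L) (hS : S ∈ t.canonPath C K L) :
    IsIndep G S ∧ C ⊆ S ∧ S ⊆ C ∪ t.verts := by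
  induction t generalizing C K L with
  | leaf b =>
    have hCt := disjoint_left.1 h.disjoint_verts
    rcases mem_glue hS with hS | hS
    · obtain ⟨hsub, hagree⟩ := of_mem_remSeq hS
      refine ⟨h.isIndep_source.mono hsub, fun x hx => (hagree x ?_).2 (mem_union_left _ hx),
        hsub.trans (union_subset_union_right h.source_subset)⟩
      exact fun hxK => hCt hx (h.source_subset (mem_toList.1 hxK))
    · have hsub := (addSeq_subset hS).trans (by rw [toList_toFinset])
      exact ⟨h.isIndep_target.mono hsub, (of_mem_addSeq hS).1,
        hsub.trans (union_subset_union_right h.target_subset)⟩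
  | node b l r ihl ihr =>
    obtain ⟨-, -, -, -, htl, htr⟩ := id ht
    have hCt := disjoint_left.1 h.disjoint_verts
    rcases mem_glue hS with hS | hS
    · obtain ⟨hsub, hagree⟩ := of_mem_remSeq hS
      refine ⟨h.isIndep_source.mono hsub, fun x hx => (hagree x ?_).2 (mem_union_left _ hx),
        hsub.trans (union_subset_union_right h.source_subset)⟩
      exact fun hxK => hCt hx (bag_subset_verts (mem_inter.1 (mem_toList.1 hxK)).2)
    rcases mem_glue hS with hS | hS
    · obtain ⟨hind, hlo, hhi⟩ := ihl htl (h.left ht) hS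
      exact ⟨hind, subset_union_left.trans hlo, hhi.trans (union_subset
        (union_subset_union_right (inter_subset_right.trans right_subset_verts))
        (left_subset_verts.trans subset_union_right))⟩
    rcases mem_glue hS with hS | hS
    · obtain ⟨hind, hlo, hhi⟩ := ihr htr (h.right ht) hS
      exact ⟨hind, subset_union_left.trans hlo, hhi.trans (union_subset
        (union_subset_union_right (inter_subset_right.trans left_subset_verts))
        (right_subset_verts.trans subset_union_right))⟩
    · have hsub : S ⊆ C ∪ L := by
        refine (addSeq_subset hS).trans ?_
        intro x
        simp only [toList_toFinset, mem_union, mem_inter]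
        tauto
      refine ⟨h.isIndep_target.mono hsub, subset_union_left.trans (subset_union_left.trans
        (of_mem_addSeq hS).1), hsub.trans (union_subset_union_right h.target_subset)⟩

end CanonicalPaths

section CanonicalSteps

variable {V : Type*} [DecidableEq V] {G : SimpleGraph V}

open BTree

def IsCanonicalStep (t : BTree V) (K L W W' : Finset V) : Prop :=
  ∃ v ∈ t.verts, ∃ ph, IsFlip W W' v ph ∧
    (∀ x ∈ t.done v ph, x ∈ W ↔ x ∈ L) ∧ (∀ x ∈ t.rest v ph, x ∈ W ↔ x ∈ K)

namespace Admissible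

variable {b : Finset V} {l r : BTree V} {C K L W W' : Finset V}

theorem isCanonicalStep_leaf (h : Admissible G (leaf b) C K L)
    (hu : usesEdge ((leaf b).canonPath C K L) W W') : IsCanonicalStep (leaf b) K L W W' := by
  have hCt := disjoint_left.1 h.disjoint_verts
  suffices ∃ v ∈ b, ∃ ph, IsFlip W W' v ph by
    obtain ⟨v, hv, ph, hflip⟩ := this
    exact ⟨v, hv, ph, hflip, by simp [done], by simp [rest]⟩
  rcases usesEdge_glue h.joins_remSeq_leaf (by simpa using addSeq_joins C L.toList) hu with hu | hu
  · obtain ⟨v, hv, hflip⟩ := exists_isFlip_of_usesEdge_remSeq (nodup_toList K)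
      (fun x hx => mem_union_right _ (mem_toList.1 hx)) hu
    exact ⟨v, h.source_subset (mem_toList.1 hv), false, hflip⟩
  · obtain ⟨v, hv, hflip⟩ := exists_isFlip_of_usesEdge_addSeq (nodup_toList L)
      (fun x hx hxC => hCt hxC (h.target_subset (mem_toList.1 hx))) hu
    exact ⟨v, h.target_subset (mem_toList.1 hv), true, hflip⟩

theorem isCanonicalStep_remSeq (h : Admissible G (node b l r) C K L)
    (ht : IsSepTree G (node b l r)) (hu : usesEdge (remSeq (C ∪ K) (K ∩ b).toList) W W') :
    IsCanonicalStep (node b l r) K L W W' := by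
  obtain ⟨hbl, hbr, -, -, -, -⟩ := ht
  obtain ⟨v, hv, hflip⟩ := exists_isFlip_of_usesEdge_remSeq (nodup_toList _)
    (fun x hx => mem_union_right _ (mem_inter.1 (mem_toList.1 hx)).1) hu
  have hvb := (mem_inter.1 (mem_toList.1 hv)).2
  refine ⟨v, bag_subset_verts hvb, false, hflip, by simp [done, hvb], fun x hx => ?_⟩
  have hx : x ∈ l.verts ∨ x ∈ r.verts := by simpa [rest, hvb] using hx
  have hxb : x ∉ b := fun hxb =>
    hx.elim (disjoint_left.1 hbl hxb) (disjoint_left.1 hbr hxb)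
  have hxC : x ∉ C := fun hxC => disjoint_left.1 h.disjoint_verts hxC
    (hx.elim (fun h => left_subset_verts h) (fun h => right_subset_verts h))
  rw [(of_mem_remSeq (usesEdge_mem hu).1).2 x (by simp [hxb]), mem_union, or_iff_right hxC]

theorem isCanonicalStep_addSeq (h : Admissible G (node b l r) C K L)
    (ht : IsSepTree G (node b l r))
    (hu : usesEdge (addSeq (C ∪ (L ∩ l.verts) ∪ (L ∩ r.verts)) (L ∩ b).toList) W W') :
    IsCanonicalStep (node b l r) K L W W' := by
  obtain ⟨hbl, hbr, -, -, -, -⟩ := ht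
  have hCt := disjoint_left.1 h.disjoint_verts
  have hbC : ∀ x ∈ b, x ∉ C := fun x hxb hxC => hCt hxC (bag_subset_verts hxb)
  obtain ⟨v, hv, hflip⟩ := exists_isFlip_of_usesEdge_addSeq (nodup_toList _)
    (fun x hx hxS => by
      have hxb := (mem_inter.1 (mem_toList.1 hx)).2
      simp only [mem_union, mem_inter] at hxS
      rcases hxS with (hxC | ⟨-, hxl⟩) | ⟨-, hxr⟩
      · exact hbC x hxb hxC
      · exact disjoint_left.1 hbl hxb hxl
      · exact disjoint_left.1 hbr hxb hxr) hu
  have hvb := (mem_inter.1 (mem_toList.1 hv)).2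
  refine ⟨v, bag_subset_verts hvb, true, hflip, fun x hx => ?_, by simp [rest, hvb]⟩
  have hx : x ∈ l.verts ∨ x ∈ r.verts := by simpa [done, hvb] using hx
  have hxb : x ∉ b := fun hxb =>
    hx.elim (disjoint_left.1 hbl hxb) (disjoint_left.1 hbr hxb)
  have hxC : x ∉ C := fun hxC => hCt hxC
    (hx.elim (fun h => left_subset_verts h) (fun h => right_subset_verts h))
  rw [(of_mem_addSeq (usesEdge_mem hu).1).2 x (by simp [hxb])]
  simp only [mem_union, mem_inter, hxC, false_or]
  tauto

theorem isCanonicalStep_left (h : Admissible G (node b l r) C K L)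
    (ht : IsSepTree G (node b l r))
    (hu : usesEdge (l.canonPath (C ∪ (K ∩ r.verts)) (K ∩ l.verts) (L ∩ l.verts)) W W')
    (hl : IsCanonicalStep l (K ∩ l.verts) (L ∩ l.verts) W W') :
    IsCanonicalStep (node b l r) K L W W' := by
  obtain ⟨hbl, -, hlr, -, htl, -⟩ := id ht
  obtain ⟨v, hvl, ph, hflip, hdone, hrest⟩ := hl
  have hvb : v ∉ b := fun hvb => disjoint_left.1 hbl hvb hvl
  obtain ⟨-, hlo, hhi⟩ := of_mem_canonPath htl (h.left ht) (usesEdge_mem hu).1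
  refine ⟨v, left_subset_verts hvl, ph, hflip, fun x hx => ?_, fun x hx => ?_⟩
  · simp only [done, hvb, hvl, if_false, if_true] at hx
    rw [hdone x hx, mem_inter, and_iff_left (done_subset_verts v ph l hx)]
  · simp only [rest, hvb, hvl, if_false, if_true, mem_union] at hx
    rcases hx with hx | hx
    · rw [hrest x hx, mem_inter, and_iff_left (rest_subset_verts v ph l hx)]
    · have hxl : x ∉ l.verts := fun hxl => disjoint_left.1 hlr hxl hx
      have hxC : x ∉ C := fun hxC => disjoint_left.1 h.disjoint_verts hxC (right_subset_verts hx)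
      refine ⟨fun hxW => ?_, fun hxK => hlo (mem_union_right _ (mem_inter.2 ⟨hxK, hx⟩))⟩
      exact (by simpa [hxl, hxC] using hhi hxW : x ∈ K ∧ x ∈ r.verts).1

theorem isCanonicalStep_right (h : Admissible G (node b l r) C K L)
    (ht : IsSepTree G (node b l r))
    (hu : usesEdge (r.canonPath (C ∪ (L ∩ l.verts)) (K ∩ r.verts) (L ∩ r.verts)) W W')
    (hr : IsCanonicalStep r (K ∩ r.verts) (L ∩ r.verts) W W') :
    IsCanonicalStep (node b l r) K L W W' := by
  obtain ⟨-, hbr, hlr, -, -, htr⟩ := id ht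
  obtain ⟨v, hvr, ph, hflip, hdone, hrest⟩ := hr
  have hvb : v ∉ b := fun hvb => disjoint_left.1 hbr hvb hvr
  have hvl : v ∉ l.verts := fun hvl => disjoint_left.1 hlr hvl hvr
  obtain ⟨-, hlo, hhi⟩ := of_mem_canonPath htr (h.right ht) (usesEdge_mem hu).1
  refine ⟨v, right_subset_verts hvr, ph, hflip, fun x hx => ?_, fun x hx => ?_⟩
  · simp only [done, hvb, hvl, if_false, mem_union] at hx
    rcases hx with hx | hx
    · have hxr : x ∉ r.verts := fun hxr => disjoint_left.1 hlr hx hxr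
      have hxC : x ∉ C := fun hxC => disjoint_left.1 h.disjoint_verts hxC (left_subset_verts hx)
      refine ⟨fun hxW => ?_, fun hxL => hlo (mem_union_right _ (mem_inter.2 ⟨hxL, hx⟩))⟩
      exact (by simpa [hxr, hxC] using hhi hxW : x ∈ L ∧ x ∈ l.verts).1
    · rw [hdone x hx, mem_inter, and_iff_left (done_subset_verts v ph r hx)]
  · simp only [rest, hvb, hvl, if_false] at hx
    rw [hrest x hx, mem_inter, and_iff_left (rest_subset_verts v ph r hx)]

end Admissible

theorem canonPath_isCanonicalStep {t : BTree V} (ht : IsSepTree G t) {C K L W W' : Finset V}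
    (h : Admissible G t C K L) (hu : usesEdge (t.canonPath C K L) W W') :
    IsCanonicalStep t K L W W' := by
  induction t generalizing C K L with
  | leaf b => exact h.isCanonicalStep_leaf hu
  | node b l r ihl ihr =>
    obtain ⟨-, -, -, -, htl, htr⟩ := id ht
    have h1 := h.joins_remSeq ht
    have h2 := canonPath_joins htl (h.left ht)
    have h3 := canonPath_joins htr (h.right ht)
    rw [union_right_comm] at h3
    have h4 := h.joins_addSeq
    rw [canonPath] at hu
    rcases usesEdge_glue h1 (h2.glue (h3.glue h4)) hu with hu | hu
    · exact h.isCanonicalStep_remSeq ht hu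
    rcases usesEdge_glue h2 (h3.glue h4) hu with hu | hu
    · exact h.isCanonicalStep_left ht hu (ihl htl (h.left ht) hu)
    rcases usesEdge_glue h3 h4 hu with hu | hu
    · exact h.isCanonicalStep_right ht hu (ihr htr (h.right ht) hu)
    · exact h.isCanonicalStep_addSeq ht hu

theorem IsCanonicalStep.agree {t : BTree V} {K L W W' : Finset V} {v : V} {ph : Bool}
    (h : IsCanonicalStep t K L W W') (hflip : IsFlip W W' v ph) :
    (∀ x ∈ t.done v ph, x ∈ W ↔ x ∈ L) ∧ (∀ x ∈ t.rest v ph, x ∈ W ↔ x ∈ K) := by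
  obtain ⟨u, -, ph', hflip', hdone, hrest⟩ := h
  obtain ⟨rfl, rfl⟩ := hflip'.unique hflip
  exact ⟨hdone, hrest⟩

end CanonicalSteps

section Glauber

variable {V : Type*} [Fintype V] [DecidableEq V] {G : SimpleGraph V} {lam : ℝ}
  {W W' : Finset V}

theorem exists_isFlip_of_glauberP_pos (hP : 0 < glauberP G lam W W') (hne : W ≠ W') :
    ∃ v ph, IsFlip W W' v ph ∧ (ph = true → IsIndep G W') := by
  obtain ⟨v, -, hv⟩ := exists_ne_zero_of_sum_ne_zero (right_ne_zero_of_mul hP.ne')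
  split_ifs at hv with hvW h1 h2 hind h3 h4 h5
  · exact ⟨v, false, ⟨hvW, h1⟩, nofun⟩
  · exact absurd h2.symm hne
  · exact absurd rfl hv
  · exact ⟨v, true, ⟨hvW, h3⟩, fun _ => h3 ▸ hind⟩
  · exact absurd h4.symm hne
  · exact absurd rfl hv
  · exact absurd h5.symm hne
  · exact absurd rfl hv

theorem le_glauberP (hlam : 0 < lam) {v : V} {ph : Bool} (hflip : IsFlip W W' v ph)
    (hW' : ph = true → IsIndep G W') :
    1 / (Fintype.card V : ℝ) * (cond ph lam 1 / (lam + 1)) ≤ glauberP G lam W W' := by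
  refine mul_le_mul_of_nonneg_left (le_trans ?_ (single_le_sum (fun u _ => ?_) (mem_univ v)))
    (by positivity)
  · cases ph <;> obtain ⟨hvW, rfl⟩ := hflip
    · simp [hvW]
    · simp [hvW, hW' rfl]
  · split_ifs <;> positivity

theorem hardCore_union_le (hlam : 0 < lam) {v : V} {ph : Bool} (hflip : IsFlip W W' v ph)
    (hW' : ph = true → IsIndep G W') :
    hardCore G lam (W ∪ W') ≤
      Fintype.card V * (lam + 1) * (hardCore G lam W * glauberP G lam W W') := by
  have hn : (0 : ℝ) < Fintype.card V := Nat.cast_pos.2 (Fintype.card_pos_iff.2 ⟨v⟩)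
  have hM : hardCore G lam (W ∪ W') = cond ph lam 1 * hardCore G lam W := by
    cases ph <;> obtain ⟨hvW, rfl⟩ := hflip
    · simp [union_eq_left.2 (erase_subset v W)]
    · simp [hardCore, union_eq_right.2 (subset_insert v W), card_insert_of_notMem hvW, pow_succ]
      ring
  calc hardCore G lam (W ∪ W')
      = Fintype.card V * (lam + 1) *
          (hardCore G lam W * (1 / (Fintype.card V : ℝ) * (cond ph lam 1 / (lam + 1)))) := by
        rw [hM]
        field_simp
    _ ≤ _ := by
        gcongr
        · exact (hardCore_pos hlam W).le
        · exact le_glauberP hlam hflip hW'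

end Glauber

section Encoding

variable {V : Type*} [Fintype V] [DecidableEq V] {G : SimpleGraph V} {lam : ℝ}

theorem card_add_card_add_card_inter {A D U K L M : Finset V}
    (hU : ∀ x, x ∈ U ↔ x ∉ A ∧ x ∉ D) (hAD : Disjoint A D)
    (hMD : ∀ x ∈ D, x ∈ M ↔ x ∈ L) (hMU : ∀ x ∈ U, x ∈ M ↔ x ∈ K) :
    K.card + L.card + (M ∩ A).card =
      M.card + ((K ∩ D) ∪ (L ∩ U)).card + ((K ∩ A).card + (L ∩ A).card) := by
  simp only [card_eq_sum_ite (subset_univ _), ← sum_add_distrib]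
  refine sum_congr rfl fun x _ => ?_
  have := hU x
  have := hMD x
  have := hMU x
  have : x ∈ A → x ∉ D := fun h => disjoint_left.1 hAD h
  simp only [mem_inter, mem_union]
  split_ifs <;> grind

/-- Outside `A`, the pairs `(K, L)` and `(M, K ∩ D ∪ L ∩ U)` have the same vertices, counted
with multiplicity. -/
theorem hardCore_mul_hardCore_le (hlam : 0 < lam) {A D U K L M : Finset V}
    (hU : ∀ x, x ∈ U ↔ x ∉ A ∧ x ∉ D) (hAD : Disjoint A D)
    (hMD : ∀ x ∈ D, x ∈ M ↔ x ∈ L) (hMU : ∀ x ∈ U, x ∈ M ↔ x ∈ K) {α : ℕ}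
    (hK : (K ∩ A).card ≤ α) (hL : (L ∩ A).card ≤ α) (hM : (M ∩ A).card ≤ α) :
    hardCore G lam K * hardCore G lam L ≤
      lamTilde lam ^ (2 * α) * (hardCore G lam M * hardCore G lam ((K ∩ D) ∪ (L ∩ U))) := by
  have hcard := card_add_card_add_card_inter hU hAD hMD hMU
  have hpow : lam ^ (K.card + L.card) = lam ^ (M.card + ((K ∩ D) ∪ (L ∩ U)).card) *
      (lam ^ ((K ∩ A).card + (L ∩ A).card) / lam ^ (M ∩ A).card) := by
    rw [mul_div_assoc', eq_div_iff (pow_pos hlam _).ne', ← pow_add, ← pow_add, hcard]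
  rw [hardCore_mul_hardCore, hardCore_mul_hardCore, hpow]
  calc lam ^ (M.card + ((K ∩ D) ∪ (L ∩ U)).card) *
        (lam ^ ((K ∩ A).card + (L ∩ A).card) / lam ^ (M ∩ A).card) / Z G lam ^ 2
      ≤ lam ^ (M.card + ((K ∩ D) ∪ (L ∩ U)).card) * lamTilde lam ^ (2 * α) / Z G lam ^ 2 := by
        gcongr
        exact pow_div_pow_le_lamTilde_pow hlam (by omega) (by omega)
    _ = _ := by ring

theorem sum_hardCore_le_numIndepOn_sq (hlam : 0 < lam) {A : Finset V}
    {P : Finset (Finset V × Finset V)} (η : Finset V × Finset V → Finset V)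
    (hP : ∀ p ∈ P, IsIndep G p.1 ∧ IsIndep G p.2 ∧ IsIndep G (η p))
    (hinj : Set.InjOn (fun p => ((p.1 ∩ A, p.2 ∩ A), η p)) P) :
    ∑ p ∈ P, hardCore G lam (η p) ≤ (numIndepOn G A : ℝ) ^ 2 := by
  set F := (indepSets G).filter (· ⊆ A)
  have hF : ∀ I, IsIndep G I → I ∩ A ∈ F := fun I hI =>
    mem_filter.2 ⟨mem_indepSets.2 (hI.mono inter_subset_left), inter_subset_right⟩
  calc ∑ p ∈ P, hardCore G lam (η p)
      = ∑ q ∈ P.image fun p => ((p.1 ∩ A, p.2 ∩ A), η p), hardCore G lam q.2 :=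
        (sum_image (f := fun q => hardCore G lam q.2) hinj).symm
    _ ≤ ∑ q ∈ (F ×ˢ F) ×ˢ indepSets G, hardCore G lam q.2 := by
        refine sum_le_sum_of_subset_of_nonneg (fun q hq => ?_)
          fun q _ _ => (hardCore_pos hlam q.2).le
        obtain ⟨p, hp, rfl⟩ := mem_image.1 hq
        obtain ⟨h1, h2, h3⟩ := hP p hp
        exact mem_product.2 ⟨mem_product.2 ⟨hF _ h1, hF _ h2⟩, mem_indepSets.2 h3⟩
    _ = (numIndepOn G A : ℝ) ^ 2 := by
        rw [sum_product, sum_congr rfl fun _ _ => sum_hardCore hlam, sum_const, card_product]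
        simp [numIndepOn, F, sq]

/-- `(K, L) ↦ (K ∩ A, L ∩ A, K ∩ D ∪ L ∩ U)` is injective on `P`. -/
theorem sum_hardCore_mul_hardCore_le (hlam : 0 < lam) {A D U W M : Finset V}
    (hU : ∀ x, x ∈ U ↔ x ∉ A ∧ x ∉ D) (hAD : Disjoint A D)
    (hDU : ∀ x ∈ D, ∀ y ∈ U, ¬ G.Adj x y) (hM : IsIndep G M)
    (hMD : ∀ x ∈ D, x ∈ M ↔ x ∈ W) (hMU : ∀ x ∈ U, x ∈ M ↔ x ∈ W)
    {P : Finset (Finset V × Finset V)}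
    (hP : ∀ p ∈ P, IsIndep G p.1 ∧ IsIndep G p.2 ∧
      (∀ x ∈ D, x ∈ W ↔ x ∈ p.2) ∧ (∀ x ∈ U, x ∈ W ↔ x ∈ p.1)) :
    ∑ p ∈ P, hardCore G lam p.1 * hardCore G lam p.2 ≤
      lamTilde lam ^ (2 * alphaOn G A) * hardCore G lam M * (numIndepOn G A : ℝ) ^ 2 := by
  set η : Finset V × Finset V → Finset V := fun p => (p.1 ∩ D) ∪ (p.2 ∩ U)
  have hη : ∀ p ∈ P, IsIndep G p.1 ∧ IsIndep G p.2 ∧ IsIndep G (η p) := fun p hp => by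
    obtain ⟨h1, h2, -, -⟩ := hP p hp
    exact ⟨h1, h2, (h1.mono inter_subset_left).union (h2.mono inter_subset_left)
      fun x hx y hy => hDU x (mem_inter.1 hx).2 y (mem_inter.1 hy).2⟩
  have hinj : Set.InjOn (fun p => ((p.1 ∩ A, p.2 ∩ A), η p)) P := by
    intro p hp q hq hpq
    simp only [Prod.mk.injEq] at hpq
    obtain ⟨⟨hK, hL⟩, hη⟩ := hpq
    obtain ⟨-, -, hpD, hpU⟩ := hP p hp
    obtain ⟨-, -, hqD, hqU⟩ := hP q hq
    refine Prod.ext (ext fun x => ?_) (ext fun x => ?_) <;>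
    · have := Finset.ext_iff.1 hK x
      have := Finset.ext_iff.1 hL x
      have := Finset.ext_iff.1 hη x
      have := hU x
      have := hpD x
      have := hpU x
      have := hqD x
      have := hqU x
      simp only [η, mem_inter, mem_union] at *
      grind
  calc ∑ p ∈ P, hardCore G lam p.1 * hardCore G lam p.2
      ≤ ∑ p ∈ P, lamTilde lam ^ (2 * alphaOn G A) * hardCore G lam M * hardCore G lam (η p) := by
        refine sum_le_sum fun p hp => ?_
        obtain ⟨h1, h2, hD, hU'⟩ := hP p hp
        rw [mul_assoc]
        exact hardCore_mul_hardCore_le hlam hU hAD (fun x hx => (hMD x hx).trans (hD x hx))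
          (fun x hx => (hMU x hx).trans (hU' x hx)) (card_inter_le_alphaOn h1 A)
          (card_inter_le_alphaOn h2 A) (card_inter_le_alphaOn hM A)
    _ ≤ _ := by
        rw [← mul_sum]
        refine mul_le_mul_of_nonneg_left (sum_hardCore_le_numIndepOn_sq hlam η hη hinj) ?_
        exact mul_nonneg (pow_nonneg (zero_le_one.trans (one_le_lamTilde hlam)) _)
          (hardCore_pos hlam M).le

end Encoding

section Congestion

variable {V : Type*} [Fintype V] [DecidableEq V] {G : SimpleGraph V} {lam : ℝ}

open Classical in
theorem congestionAt_le_of_length_le (hlam : 0 < lam)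
    {γ : Finset V → Finset V → List (Finset V)} {W W' : Finset V}
    (hP : 0 < glauberP G lam W W') {m : ℕ}
    (hlen : ∀ K ∈ indepSets G, ∀ L ∈ indepSets G, (γ K L).length - 1 ≤ m) :
    congestionAt G lam γ W W' ≤ m / (hardCore G lam W * glauberP G lam W W') *
      ∑ p ∈ (indepSets G ×ˢ indepSets G).filter (fun p => usesEdge (γ p.1 p.2) W W'),
        hardCore G lam p.1 * hardCore G lam p.2 := by
  have hx := mul_pos (hardCore_pos (G := G) hlam W) hP
  rw [congestionAt, ← sum_product', ← sum_filter, div_eq_mul_one_div (m : ℝ), mul_comm (m : ℝ),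
    mul_assoc]
  refine mul_le_mul_of_nonneg_left ?_ (one_div_pos.2 hx).le
  rw [mul_sum]
  refine sum_le_sum fun p hp => ?_
  obtain ⟨hK, hL⟩ := mem_product.1 (mem_filter.1 hp).1
  rw [mul_comm (m : ℝ)]
  have := (hardCore_pos (G := G) hlam p.1).le
  have := (hardCore_pos (G := G) hlam p.2).le
  gcongr
  exact_mod_cast hlen p.1 hK p.2 hL

theorem admissible_empty {t : BTree V} (htv : t.verts = univ) {K L : Finset V}
    (hK : IsIndep G K) (hL : IsIndep G L) : Admissible G t ∅ K L :=
  ⟨htv ▸ subset_univ K, htv ▸ subset_univ L, disjoint_empty_left _, by rwa [empty_union],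
    by rwa [empty_union]⟩

theorem canonPath_isReconfPath {t : BTree V} (ht : IsSepTree G t) (htv : t.verts = univ)
    {K L : Finset V} (hK : IsIndep G K) (hL : IsIndep G L) :
    IsReconfPath G K L (t.canonPath ∅ K L) := by
  have h := admissible_empty htv hK hL
  have hj := canonPath_joins ht h
  rw [empty_union, empty_union] at hj
  refine ⟨hj.1, hj.2, fun I hI => (of_mem_canonPath ht h hI).1, isChain_of_usesEdge ?_⟩
  intro W W' hu
  obtain ⟨v, -, ph, hflip, -⟩ := canonPath_isCanonicalStep ht h hu
  exact hflip.card_symmDiff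

theorem length_canonPath_sub_one_le {t : BTree V} (ht : IsSepTree G t) (htv : t.verts = univ)
    {K L : Finset V} (hK : IsIndep G K) (hL : IsIndep G L) :
    (t.canonPath ∅ K L).length - 1 ≤ 2 * Fintype.card V := by
  rw [length_canonPath ht (admissible_empty htv hK hL)]
  have := card_le_univ K
  have := card_le_univ L
  omega

open BTree in
theorem congestionAt_canonPath_le (hlam : 0 < lam) {t : BTree V} (ht : IsSepTree G t)
    (htv : t.verts = univ) {W W' : Finset V} (hW : W ∈ indepSets G)
    (hP : 0 < glauberP G lam W W') (hne : W ≠ W') :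
    congestionAt G lam (fun K L => t.canonPath ∅ K L) W W' ≤
      4 * (Fintype.card V : ℝ) ^ 2 *
        lamTilde lam ^ (2 * univ.sup (fun v => alphaOn G (t.anc v)) + 1) *
        ((univ.sup (fun v => numIndepOn G (t.anc v)) : ℕ) : ℝ) ^ 2 := by
  classical
  obtain ⟨v, ph, hflip, hW'⟩ := exists_isFlip_of_glauberP_pos hP hne
  have hvA : v ∈ t.anc v := mem_anc_self (htv ▸ mem_univ v)
  have hU : ∀ x, x ∈ t.rest v ph ↔ x ∉ t.anc v ∧ x ∉ t.done v ph :=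
    fun x => ht.mem_rest_iff (htv ▸ mem_univ x)
  have hAD := ht.disjoint_anc_done v ph
  have hM : ∀ x ∉ t.anc v, x ∈ W ∪ W' ↔ x ∈ W :=
    fun x hx => hflip.mem_union_iff (ne_of_mem_of_not_mem hvA hx).symm
  have hsum := sum_hardCore_mul_hardCore_le hlam hU hAD (ht.not_adj_done_rest v ph)
    (hflip.isIndep_union (mem_indepSets.1 hW) hW') (fun x hx => hM x (disjoint_right.1 hAD hx))
    (fun x hx => hM x ((hU x).1 hx).1)
    (P := (indepSets G ×ˢ indepSets G).filter
      fun p => usesEdge (t.canonPath ∅ p.1 p.2) W W') fun p hp => by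
      obtain ⟨hpair, hu⟩ := mem_filter.1 hp
      obtain ⟨hK, hL⟩ := mem_product.1 hpair
      rw [mem_indepSets] at hK hL
      exact ⟨hK, hL, (canonPath_isCanonicalStep ht (admissible_empty htv hK hL) hu).agree hflip⟩
  have hx := mul_pos (hardCore_pos (G := G) hlam W) hP
  have hα : alphaOn G (t.anc v) ≤ univ.sup (fun v => alphaOn G (t.anc v)) :=
    le_sup (f := fun v => alphaOn G (t.anc v)) (mem_univ v)
  have hN : numIndepOn G (t.anc v) ≤ univ.sup (fun v => numIndepOn G (t.anc v)) :=
    le_sup (f := fun v => numIndepOn G (t.anc v)) (mem_univ v)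
  have h1 := one_le_lamTilde hlam
  have hlam1 : lam + 1 ≤ 2 * lamTilde lam := by
    have : lam ≤ lamTilde lam := le_max_left _ _
    linarith
  calc congestionAt G lam (fun K L => t.canonPath ∅ K L) W W'
      ≤ (2 * Fintype.card V : ℕ) / (hardCore G lam W * glauberP G lam W W') * _ :=
        congestionAt_le_of_length_le hlam hP fun K hK L hL =>
          length_canonPath_sub_one_le ht htv (mem_indepSets.1 hK) (mem_indepSets.1 hL)
    _ ≤ (2 * Fintype.card V : ℕ) / (hardCore G lam W * glauberP G lam W W') *
          (lamTilde lam ^ (2 * alphaOn G (t.anc v)) * hardCore G lam (W ∪ W') *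
            (numIndepOn G (t.anc v) : ℝ) ^ 2) :=
        mul_le_mul_of_nonneg_left hsum (div_nonneg (Nat.cast_nonneg _) hx.le)
    _ ≤ (2 * Fintype.card V : ℕ) / (hardCore G lam W * glauberP G lam W W') *
          (lamTilde lam ^ (2 * univ.sup (fun v => alphaOn G (t.anc v))) *
            (Fintype.card V * (2 * lamTilde lam) * (hardCore G lam W * glauberP G lam W W')) *
            ((univ.sup (fun v => numIndepOn G (t.anc v)) : ℕ) : ℝ) ^ 2) := by
        have := (hardCore_pos (G := G) hlam (W ∪ W')).le
        have : 0 ≤ lamTilde lam := zero_le_one.trans h1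
        have := div_nonneg (Nat.cast_nonneg (2 * Fintype.card V)) hx.le
        gcongr
        exact (hardCore_union_le hlam hflip hW').trans
          (mul_le_mul_of_nonneg_right (by gcongr) hx.le)
    _ = _ := by
        have := (hardCore_pos (G := G) hlam W).ne'
        have := hP.ne'
        field_simp
        push_cast
        ring

end Congestion

/-- Let `G` be a graph on `n` vertices, `λ > 0`, and let `t` be a separator
tree of `G` (its bags partition `V(G)`). With `A_v` the union of the bags of the ancestors of
the node containing `v`, there is a family `Γ` of canonical paths between the independent sets
of `G` whose congestion for the Glauber dynamics with fugacity `λ` satisfies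
`ρ(Γ) ≤ 4 n² λ̃^{2α+1} max_v |𝓘(G[A_v])|²`, where `λ̃ = max (λ, 1/λ)` and
`α = max_v α(G[A_v])`. -/
theorem statement_15 (V : Type) [Fintype V] [DecidableEq V] (G : SimpleGraph V)
    (lam : ℝ) (hlam : 0 < lam) (t : BTree V)
    (ht : IsSepTree G t) (htv : t.verts = Finset.univ) :
    ∃ γ : Finset V → Finset V → List (Finset V),
      (∀ K L, K ∈ indepSets G → L ∈ indepSets G → IsReconfPath G K L (γ K L)) ∧
      ∀ W W' : Finset V, W ∈ indepSets G → 0 < glauberP G lam W W' → W ≠ W' →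
        congestionAt G lam γ W W' ≤
          4 * (Fintype.card V : ℝ) ^ 2 *
            lamTilde lam ^ (2 * Finset.univ.sup (fun v => alphaOn G (t.anc v)) + 1) *
            ((Finset.univ.sup (fun v => numIndepOn G (t.anc v)) : ℕ) : ℝ) ^ 2 :=
  ⟨fun K L => t.canonPath ∅ K L,
    fun _ _ hK hL => canonPath_isReconfPath ht htv (mem_indepSets.1 hK) (mem_indepSets.1 hL),
    fun _ _ hW hP hne => congestionAt_canonPath_le hlam ht htv hW hP hne⟩
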